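/- Let ν ≥ 2 and d ≥ 1, let q₁, …, q_{ν−1} be real numbers, and for ϑ = (ϑ₁,…,ϑ_d) ∈ ℝ^d define the ν×ν real symmetric matrix H(ϑ) with H(ϑ)_{jj} = 1 + q_j for j ∈ {1,…,ν−1}, H(ϑ)_{νν} = ν − 1 + 2∑_{s=1}^{d} (1 − cos ϑ_s), H(ϑ)_{jν} = H(ϑ)_{νj} = −1 for j ∈ {1,…,ν−1}, and all other entries 0. Suppose q* ∈ ℝ is such that the set { j ∈ {1,…,ν−1} : q_j = q* } has at least m elements, where m ≥ 2. Then for every ϑ ∈ ℝ^d, the number q* + 1 is an eigenvalue of H(ϑ) of multiplicity at least m − 1. -/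

import Mathlib

open Matrix

/-- The Floquet fiber matrix of the Schrödinger operator on the lattice `ℤ^d`
decorated with `ν − 1` pendant vertices carrying potential values `q`. -/
noncomputable def pendantFiberQ (ν d : ℕ) (q : Fin (ν - 1) → ℝ) (ϑ : Fin d → ℝ) :
    Matrix (Fin ν) (Fin ν) ℝ :=
  fun j k =>
    if j = k then
      (if h : (j : ℕ) < ν - 1 then 1 + q ⟨j, h⟩
       else (ν : ℝ) - 1 + 2 * ∑ s : Fin d, (1 - Real.cos (ϑ s)))
    else if (j : ℕ) = ν - 1 ∨ (k : ℕ) = ν - 1 then -1 else 0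

lemma pendant_col_eq (ν d : ℕ) (q : Fin (ν - 1) → ℝ) (qstar : ℝ) (ϑ : Fin d → ℝ)
    (a b : Fin (ν - 1)) (ha : q a = qstar) (hb : q b = qstar) (i : Fin ν)
    (ea eb : Fin ν) (hea : (ea : ℕ) = a) (heb : (eb : ℕ) = b) :
    (pendantFiberQ ν d q ϑ - (qstar + 1) • (1 : Matrix (Fin ν) (Fin ν) ℝ)) i ea
      = (pendantFiberQ ν d q ϑ - (qstar + 1) • (1 : Matrix (Fin ν) (Fin ν) ℝ)) i eb := by
  have hlta : (ea : ℕ) < ν - 1 := hea ▸ a.isLt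
  have hltb : (eb : ℕ) < ν - 1 := heb ▸ b.isLt
  have hna : ¬ ((ea : ℕ) = ν - 1) := Nat.ne_of_lt hlta
  have hnb : ¬ ((eb : ℕ) = ν - 1) := Nat.ne_of_lt hltb
  have hqa : q ⟨(ea : ℕ), hlta⟩ = qstar := by
    have : (⟨(ea : ℕ), hlta⟩ : Fin (ν - 1)) = a := Fin.ext hea
    rw [this, ha]
  have hqb : q ⟨(eb : ℕ), hltb⟩ = qstar := by
    have : (⟨(eb : ℕ), hltb⟩ : Fin (ν - 1)) = b := Fin.ext heb
    rw [this, hb]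
  simp only [Matrix.sub_apply, Matrix.smul_apply, Matrix.one_apply, pendantFiberQ, smul_eq_mul]
  by_cases h1 : i = ea
  · by_cases h2 : i = eb
    · subst h1; rw [h2]
    · subst h1
      rw [if_pos rfl, if_pos rfl, if_neg h2, if_neg h2, dif_pos hlta, hqa]
      have hi : ¬ ((i : ℕ) = ν - 1 ∨ (eb : ℕ) = ν - 1) := by
        rintro (h | h) <;> [exact hna h; exact hnb h]
      rw [if_neg hi]
      ring
  · by_cases h2 : i = eb
    · subst h2
      rw [if_neg h1, if_pos rfl, if_pos rfl, if_neg h1, dif_pos hltb, hqb]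
      have hi : ¬ ((i : ℕ) = ν - 1 ∨ (ea : ℕ) = ν - 1) := by
        rintro (h | h)
        · exact hnb h
        · exact hna h
      rw [if_neg hi]
      ring
    · rw [if_neg h1, if_neg h2, if_neg h1, if_neg h2]
      by_cases hi : (i : ℕ) = ν - 1
      · rw [if_pos (Or.inl hi), if_pos (Or.inl hi)]
      · have h3 : ¬ ((i : ℕ) = ν - 1 ∨ (ea : ℕ) = ν - 1) := by
          rintro (h | h) <;> [exact hi h; exact hna h]
        have h4 : ¬ ((i : ℕ) = ν - 1 ∨ (eb : ℕ) = ν - 1) := by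
          rintro (h | h) <;> [exact hi h; exact hnb h]
        rw [if_neg h3, if_neg h4]

/-- if the potential value `q*` is taken at least `m ≥ 2` times among
`q₁, …, q_{ν−1}`, then `q* + 1` is an eigenvalue of `H(ϑ)` of multiplicity at least
`m − 1` for every `ϑ` (a flat band of multiplicity `m − 1`). -/
theorem pendant_flat_band (ν d : ℕ) (hν : 2 ≤ ν) (hd : 1 ≤ d)
    (q : Fin (ν - 1) → ℝ) (qstar : ℝ) (m : ℕ) (hm : 2 ≤ m)
    (hcard : m ≤ (Finset.univ.filter fun j : Fin (ν - 1) => q j = qstar).card)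
    (ϑ : Fin d → ℝ) :
    m - 1 ≤ Module.finrank ℝ
        (LinearMap.ker (Matrix.toLin'
          (pendantFiberQ ν d q ϑ - (qstar + 1) • (1 : Matrix (Fin ν) (Fin ν) ℝ)))) := by
  set M := pendantFiberQ ν d q ϑ - (qstar + 1) • (1 : Matrix (Fin ν) (Fin ν) ℝ) with hM
  set S := Finset.univ.filter fun j : Fin (ν - 1) => q j = qstar with hS
  obtain ⟨t, hts, htc⟩ := Finset.exists_subset_card_eq hcard
  have htne : t.Nonempty := Finset.card_pos.mp (by omega)
  obtain ⟨b, hb⟩ := htne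
  have htc' : (t.erase b).card = m - 1 := by rw [Finset.card_erase_of_mem hb, htc]
  have hqS : ∀ j ∈ t, q j = qstar := fun j hj => (Finset.mem_filter.mp (hts hj)).2
  set g : Fin (m - 1) → Fin (ν - 1) := ⇑((t.erase b).orderEmbOfFin htc') with hg
  have hgmem : ∀ i, g i ∈ t.erase b := fun i => (t.erase b).orderEmbOfFin_mem htc' i
  -- embedding into Fin ν
  have hemb : ∀ j : Fin (ν - 1), (j : ℕ) < ν := fun j =>
    lt_of_lt_of_le j.isLt (Nat.sub_le ν 1)
  set emb : Fin (ν - 1) → Fin ν := fun j => ⟨j, hemb j⟩ with he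
  have hembinj : Function.Injective emb := by
    intro x y h
    apply Fin.ext
    have : (emb x : ℕ) = (emb y : ℕ) := congrArg Fin.val h
    simpa [he] using this
  set v : Fin (m - 1) → (Fin ν → ℝ) := fun i =>
    Pi.single (emb (g i)) 1 - Pi.single (emb b) 1 with hv
  have hker : ∀ i, v i ∈ LinearMap.ker (Matrix.toLin' M) := by
    intro i
    rw [LinearMap.mem_ker, Matrix.toLin'_apply, hv]
    simp only [Matrix.mulVec_sub, Matrix.mulVec_single]
    funext j
    have := pendant_col_eq ν d q qstar ϑ (g i) b
      (hqS _ (Finset.mem_of_mem_erase (hgmem i))) (hqS _ hb) j (emb (g i)) (emb b) rfl rfl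
    simp only [Pi.sub_apply, Pi.zero_apply, mul_one, Pi.smul_apply, Matrix.col_apply, op_smul_eq_mul]
    rw [← hM] at this
    rw [this, sub_self]
  have hind : LinearIndependent ℝ v := by
    rw [Fintype.linearIndependent_iff]
    intro c hc i
    have := congrFun hc (emb (g i))
    simp only [hv, Finset.sum_apply, Pi.smul_apply, Pi.sub_apply, Pi.zero_apply,
      smul_eq_mul] at this
    rw [Finset.sum_eq_single i] at this
    · have h1 : (Pi.single (emb (g i)) (1:ℝ) : Fin ν → ℝ) (emb (g i)) = 1 := by simp
      have h2 : (Pi.single (emb b) (1:ℝ) : Fin ν → ℝ) (emb (g i)) = 0 := by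
        apply Pi.single_eq_of_ne
        exact fun h => (Finset.mem_erase.mp (hgmem i)).1 (hembinj h)
      rw [h1, h2] at this
      linarith
    · intro j _ hji
      have h1 : (Pi.single (emb (g j)) (1:ℝ) : Fin ν → ℝ) (emb (g i)) = 0 := by
        apply Pi.single_eq_of_ne
        intro h
        exact hji (((t.erase b).orderEmbOfFin htc').injective (hembinj h).symm)
      have h2 : (Pi.single (emb b) (1:ℝ) : Fin ν → ℝ) (emb (g i)) = 0 := by
        apply Pi.single_eq_of_ne
        exact fun h => (Finset.mem_erase.mp (hgmem i)).1 (hembinj h)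
      rw [h1, h2]; ring
    · intro h; exact absurd (Finset.mem_univ i) h
  set w : Fin (m - 1) → LinearMap.ker (Matrix.toLin' M) := fun i => ⟨v i, hker i⟩ with hw
  have hindw : LinearIndependent ℝ w := by
    have : v = (LinearMap.ker (Matrix.toLin' M)).subtype ∘ w := rfl
    exact LinearIndependent.of_comp _ (this ▸ hind)
  have := hindw.fintype_card_le_finrank
  simpa using this
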